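/- Let A be a d×d complex matrix with σ_max(A) ≤ r < 1 and suppose exp(d·r/(1−r)) < 2. Set α := 2 − exp(d·r/(1−r)) > 0. Then |det(I+A)| ≥ α, Re det(I+A) ≥ α, and |Im det(I+A)| ≤ 1 − α. -/

import Mathlib

open Matrix Polynomial Pointwise

/-- The largest singular value (operator 2-norm) of a complex square matrix. -/
noncomputable def sigmaMax {n : ℕ} (A : Matrix (Fin n) (Fin n) ℂ) : ℝ :=
  ‖Matrix.toEuclideanCLM (𝕜 := ℂ) (n := Fin n) A‖

/-- The smallest singular value of a complex square matrix. -/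
noncomputable def sigmaMin {n : ℕ} (A : Matrix (Fin n) (Fin n) ℂ) : ℝ :=
  ⨅ x : Metric.sphere (0 : EuclideanSpace ℂ (Fin n)) 1,
    ‖Matrix.toEuclideanCLM (𝕜 := ℂ) (n := Fin n) A (x : EuclideanSpace ℂ (Fin n))‖



lemma one_le_prod_one_add_abs (s : Multiset ℂ) :
    1 ≤ (s.map (fun z => 1 + ‖z‖)).prod := by
  induction s using Multiset.induction with
  | empty => simp
  | cons z t ih =>
    simp only [Multiset.map_cons, Multiset.prod_cons]
    nlinarith [norm_nonneg z]

lemma abs_prod_one_add_sub_one (s : Multiset ℂ) :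
    ‖(s.map (fun z => 1 + z)).prod - 1‖ ≤
      (s.map (fun z => 1 + ‖z‖)).prod - 1 := by
  induction s using Multiset.induction with
  | empty => simp
  | cons z t ih =>
    simp only [Multiset.map_cons, Multiset.prod_cons]
    have h1 : ((1 + z) * (t.map (fun z => 1 + z)).prod - 1)
        = (1 + z) * ((t.map (fun z => 1 + z)).prod - 1) + z := by ring
    rw [h1]
    have h2 := one_le_prod_one_add_abs t
    calc ‖(1 + z) * ((t.map (fun z => 1 + z)).prod - 1) + z‖
        ≤ ‖1 + z‖ * ‖(t.map (fun z => 1 + z)).prod - 1‖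
          + ‖z‖ := by
          refine (norm_add_le _ _).trans ?_; rw [norm_mul]
      _ ≤ (1 + ‖z‖) * ((t.map (fun z => 1 + ‖z‖)).prod - 1)
          + ‖z‖ := by
          have h3 := norm_add_le (1:ℂ) z
          rw [norm_one] at h3
          have h0 := norm_nonneg ((t.map (fun z => 1 + z)).prod - 1)
          have h4 : (0:ℝ) ≤ 1 + ‖z‖ := by positivity
          have := mul_le_mul h3 ih h0 h4
          linarith
      _ = (1 + ‖z‖) * (t.map (fun z => 1 + ‖z‖)).prod - 1 := by ring

lemma eval_charpoly' {d : ℕ} (M : Matrix (Fin d) (Fin d) ℂ) (μ : ℂ) :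
    M.charpoly.eval μ = (Matrix.scalar (Fin d) μ - M).det := by
  rw [Matrix.charpoly, eval_det, matPolyEquiv_charmatrix]
  simp

lemma mem_spectrum_of_isRoot {d : ℕ} (M : Matrix (Fin d) (Fin d) ℂ) {μ : ℂ}
    (h : M.charpoly.IsRoot μ) : μ ∈ spectrum ℂ M := by
  rw [spectrum.mem_iff]
  intro hu
  rw [Matrix.isUnit_iff_isUnit_det] at hu
  rw [Polynomial.IsRoot, eval_charpoly' M μ] at h
  have : algebraMap ℂ (Matrix (Fin d) (Fin d) ℂ) μ = Matrix.scalar (Fin d) μ := rfl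
  rw [this, h] at hu
  exact hu.ne_zero rfl

lemma prod_one_add_abs_le_pow (r : ℝ) (s : Multiset ℂ)
    (h : ∀ z ∈ s, ‖z‖ ≤ r) :
    (s.map (fun z => 1 + ‖z‖)).prod ≤ (1 + r) ^ (Multiset.card s) := by
  induction s using Multiset.induction with
  | empty => simp
  | cons z t ih =>
    simp only [Multiset.map_cons, Multiset.prod_cons, Multiset.card_cons, pow_succ]
    have hz : ‖z‖ ≤ r := h z (Multiset.mem_cons_self z t)
    have ht := ih (fun w hw => h w (Multiset.mem_cons_of_mem hw))
    have h1 : (0:ℝ) ≤ 1 + ‖z‖ := by positivity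
    have h2 : (1:ℝ) ≤ (1 + r) ^ Multiset.card t := by
      apply one_le_pow₀; nlinarith [norm_nonneg z]
    calc (1 + ‖z‖) * (t.map (fun z => 1 + ‖z‖)).prod
        ≤ (1 + r) * (1 + r) ^ Multiset.card t := by
          apply mul_le_mul (by linarith) ht (le_trans zero_le_one (one_le_prod_one_add_abs t)) (by nlinarith [norm_nonneg z])
      _ = (1 + r) ^ Multiset.card t * (1 + r) := by ring

theorem det_one_add_bounds_of_small {d : ℕ} (A : Matrix (Fin d) (Fin d) ℂ)
    (r : ℝ) (hr : sigmaMax A ≤ r) (hr1 : r < 1)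
    (hexp : Real.exp (d * r / (1 - r)) < 2) :
    ‖(1 + A).det‖ ≥ 2 - Real.exp (d * r / (1 - r)) ∧
    ((1 + A).det).re ≥ 2 - Real.exp (d * r / (1 - r)) ∧
    |((1 + A).det).im| ≤ 1 - (2 - Real.exp (d * r / (1 - r))) := by
  have hr' : ‖Matrix.toEuclideanCLM (𝕜 := ℂ) (n := Fin d) A‖ ≤ r := hr
  have hr0 : 0 ≤ r := le_trans (norm_nonneg _) hr'
  have key : ‖(1 + A).det - 1‖ ≤ Real.exp (d * r / (1 - r)) - 1 := by
    rcases Nat.eq_zero_or_pos d with hd | hd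
    · subst hd
      simp [Matrix.det_fin_zero]
    · haveI : NeZero d := ⟨hd.ne'⟩
      set p := (1 + A).charpoly with hp
      have hsplits : p.Splits := IsAlgClosed.splits p
      have hcard : Multiset.card p.roots = d := by
        rw [Polynomial.splits_iff_card_roots.mp hsplits, Matrix.charpoly_natDegree_eq_dim,
          Fintype.card_fin]
      have hdet : (1 + A).det = p.roots.prod := Matrix.det_eq_prod_roots_charpoly (1 + A)
      set s : Multiset ℂ := p.roots.map (fun ν => ν - 1) with hs
      have hms : s.map (fun z => 1 + z) = p.roots := by
        rw [hs, Multiset.map_map]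
        simp
      have hbound : ∀ z ∈ s, ‖z‖ ≤ r := by
        intro z hz
        rw [hs, Multiset.mem_map] at hz
        obtain ⟨ν, hν, rfl⟩ := hz
        have hroot : p.IsRoot ν := (Polynomial.mem_roots (Polynomial.Monic.ne_zero
          (Matrix.charpoly_monic _))).mp hν
        have hspec : ν ∈ spectrum ℂ (1 + A) := mem_spectrum_of_isRoot _ hroot
        have hshift : ν - 1 ∈ spectrum ℂ A := by
          have h1 : spectrum ℂ ((1 : Matrix (Fin d) (Fin d) ℂ) + A)
              = ({(1 : ℂ)} : Set ℂ) + spectrum ℂ A := by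
            rw [spectrum.singleton_add_eq, _root_.map_one]
          rw [h1] at hspec
          obtain ⟨x, hx, y, hy, hxy⟩ := Set.mem_add.mp hspec
          simp only [Set.mem_singleton_iff] at hx
          subst hx
          have : ν - 1 = y := by rw [← hxy]; ring
          rwa [this]
        have hspec2 : ν - 1 ∈ spectrum ℂ (Matrix.toEuclideanCLM (𝕜 := ℂ) (n := Fin d) A) := by
          rwa [AlgEquiv.spectrum_eq]
        calc ‖ν - 1‖ = ‖ν - 1‖ := rfl
          _ ≤ ‖Matrix.toEuclideanCLM (𝕜 := ℂ) (n := Fin d) A‖ :=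
            spectrum.norm_le_norm_of_mem hspec2
          _ ≤ r := hr'
      have hcards : Multiset.card s = d := by rw [hs, Multiset.card_map, hcard]
      calc ‖(1 + A).det - 1‖
          = ‖(s.map (fun z => 1 + z)).prod - 1‖ := by rw [hdet, hms]
        _ ≤ (s.map (fun z => 1 + ‖z‖)).prod - 1 := abs_prod_one_add_sub_one s
        _ ≤ (1 + r) ^ d - 1 := by
            have := prod_one_add_abs_le_pow r s hbound
            rw [hcards] at this; linarith
        _ ≤ Real.exp r ^ d - 1 := by
            have h1 : 1 + r ≤ Real.exp r := by
              have := Real.add_one_le_exp r; linarith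
            have := pow_le_pow_left₀ (by linarith) h1 d
            linarith
        _ = Real.exp (d * r) - 1 := by rw [← Real.exp_nat_mul]
        _ ≤ Real.exp (d * r / (1 - r)) - 1 := by
            have h1 : (0:ℝ) < 1 - r := by linarith
            have h2 : (0:ℝ) ≤ (d : ℝ) * r := by positivity
            have : (d : ℝ) * r ≤ d * r / (1 - r) := by
              rw [le_div_iff₀ h1]; nlinarith
            have := Real.exp_le_exp.mpr this
            linarith
  have him : |((1 + A).det).im| ≤ Real.exp (d * r / (1 - r)) - 1 := by
    have h1 : ((1 + A).det).im = ((1 + A).det - 1).im := by simp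
    rw [h1]
    exact le_trans (Complex.abs_im_le_norm _) key
  have hre : ((1 + A).det).re ≥ 2 - Real.exp (d * r / (1 - r)) := by
    have h1 : |((1 + A).det - 1).re| ≤ ‖(1 + A).det - 1‖ :=
      Complex.abs_re_le_norm _
    have h2 : ((1 + A).det - 1).re = ((1 + A).det).re - 1 := by simp
    rw [h2] at h1
    rw [abs_le] at h1
    linarith
  refine ⟨le_trans hre (Complex.re_le_norm _), hre, by linarith⟩
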